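/- Let r > 0, v > 0, f ≥ 0 be real numbers with Δ > (1+r)·√(1+f). Define 𝓐(f) = v·((Δ − √(1+f)·(1+r))·(Δ² + Δ·√(1+f)·(1+r) + (1+f)·(r−2)·(r+1)) + (1+f)^{3/2}·r²·(r+1))/(3Δ). Then 𝓐(f) > 0; that is, the expected profit of a liquidity provider from trading against arbitrageurs, which equals −q·v·𝓐(f) per unit of endowment q > 0, is strictly negative. -/
import Mathlib


/-- Positivity of the adverse selection cost: for `r > 0`, `v > 0`, `f ≥ 0` and
`Δ > (1+r)·√(1+f)`, one has `𝓐(f) > 0`; equivalently, the expected profit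
`−q·v·𝓐(f)` of a liquidity provider from trading against arbitrageurs is strictly
negative for every endowment `q > 0`. -/
theorem adverse_selection_pos
    (r v f Δ : ℝ) (hr : 0 < r) (hv : 0 < v) (hf : 0 ≤ f)
    (hΔ : (1 + r) * Real.sqrt (1 + f) < Δ) :
    0 < v * ((Δ - Real.sqrt (1 + f) * (1 + r)) *
          (Δ ^ 2 + Δ * Real.sqrt (1 + f) * (1 + r) + (1 + f) * (r - 2) * (r + 1)) +
        (1 + f) ^ ((3 : ℝ) / 2) * r ^ 2 * (r + 1)) / (3 * Δ) ∧
    ∀ q : ℝ, 0 < q →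
      -q * v * (v * ((Δ - Real.sqrt (1 + f) * (1 + r)) *
            (Δ ^ 2 + Δ * Real.sqrt (1 + f) * (1 + r) + (1 + f) * (r - 2) * (r + 1)) +
          (1 + f) ^ ((3 : ℝ) / 2) * r ^ 2 * (r + 1)) / (3 * Δ)) < 0 := by
  set s := Real.sqrt (1 + f) with hs_def
  have hs0 : 0 < s := Real.sqrt_pos.2 (by linarith)
  have hs2 : s ^ 2 = 1 + f := Real.sq_sqrt (by linarith)
  have h32 : (1 + f) ^ ((3 : ℝ) / 2) = s ^ 3 := by
    rw [show ((3:ℝ)/2) = (1/2) * 3 by ring,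
        Real.rpow_mul (by linarith : (0:ℝ) ≤ 1 + f), ← Real.sqrt_eq_rpow, ← hs_def]
    exact Real.rpow_natCast s 3
  have ht : 0 < Δ - s * (1 + r) := by nlinarith
  set t := Δ - s * (1 + r) with ht_def
  have hΔ0 : 0 < Δ := by nlinarith
  have hE : 0 < t *
        (Δ ^ 2 + Δ * s * (1 + r) + (1 + f) * (r - 2) * (r + 1)) +
      (1 + f) ^ ((3 : ℝ) / 2) * r ^ 2 * (r + 1) := by
    rw [h32]
    have key : t * (Δ ^ 2 + Δ * s * (1 + r) + (1 + f) * (r - 2) * (r + 1)) +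
        s ^ 3 * r ^ 2 * (r + 1)
        = t ^ 3 + 3 * s * (1 + r) * t ^ 2 + 3 * t * s ^ 2 * r * (r + 1)
          + s ^ 3 * r ^ 2 * (r + 1) := by
      linear_combination (-(Δ - s*(1+r))*(r-2)*(r+1)) * hs2
    rw [key]
    have h1 : 0 < t ^ 3 := by positivity
    have h2 : 0 < 3 * s * (1 + r) * t ^ 2 := by positivity
    have h3 : 0 < 3 * t * s ^ 2 * r * (r + 1) := by positivity
    have h4 : 0 < s ^ 3 * r ^ 2 * (r + 1) := by positivity
    linarith
  have hX : 0 < v * (t *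
        (Δ ^ 2 + Δ * s * (1 + r) + (1 + f) * (r - 2) * (r + 1)) +
      (1 + f) ^ ((3 : ℝ) / 2) * r ^ 2 * (r + 1)) / (3 * Δ) := by positivity
  refine ⟨hX, fun q hq => ?_⟩
  have := mul_pos (mul_pos hq hv) hX
  linarith
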